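/- Let Ω be a Polish space endowed with its Borel σ-algebra, and let T be a positive kernel operator on B_b(Ω) with associated kernel k. If T is strongly Feller, then there exists a positive measure μ ∈ M(Ω) such that for every x ∈ Ω the measure k(x,·) is absolutely continuous with respect to μ. -/

import Mathlib

open MeasureTheory Filter Topology

/-- The integral `∫ f dμ` of a function against a finite signed measure, defined via the
Jordan decomposition of `μ`. -/
noncomputable def sInt {Ω : Type*} [MeasurableSpace Ω] (μ : SignedMeasure Ω) (f : Ω → ℝ) : ℝ :=
  (∫ x, f x ∂μ.toJordanDecomposition.posPart) - ∫ x, f x ∂μ.toJordanDecomposition.negPart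

/-- `f` belongs to `B_b(Ω)`, i.e. `f` is a bounded measurable real-valued function. -/
def IsBddMeas {Ω : Type*} [MeasurableSpace Ω] (f : Ω → ℝ) : Prop :=
  Measurable f ∧ ∃ C : ℝ, ∀ x, |f x| ≤ C

/-- The total variation norm of a finite signed measure. -/
noncomputable def tvNorm {Ω : Type*} [MeasurableSpace Ω] (μ : SignedMeasure Ω) : ℝ :=
  (μ.totalVariation Set.univ).toReal

/-- A bounded kernel on `Ω`: `x ↦ k x` is a family of finite signed measures such that
`x ↦ k x A` is measurable for every measurable `A` and `sup_x |k x|(Ω) < ∞`. -/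
def IsBoundedKernel {Ω : Type*} [MeasurableSpace Ω] (k : Ω → SignedMeasure Ω) : Prop :=
  (∀ A : Set Ω, MeasurableSet A → Measurable fun x => k x A) ∧
    ∃ C : ℝ, ∀ x, tvNorm (k x) ≤ C

/-!
The kernel `k x A = T 1_A x` depends continuously on `x`, so a set that is null for `k x`
at every point `x` of a countable dense set is null for every `k x`. Summing the countably
many total variation measures `|k x|` over such a dense set gives an s-finite measure, and
any finite measure equivalent to it dominates the whole kernel.
-/

section

variable {Ω : Type*} [MeasurableSpace Ω]

lemma sInt_indicator_one (s : SignedMeasure Ω) {A : Set Ω} (hA : MeasurableSet A) :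
    sInt s (A.indicator 1) = s A := by
  rw [sInt, integral_indicator_one hA, integral_indicator_one hA,
    s.apply_eq_posPart_real_sub_negPart_real hA]

lemma isBddMeas_indicator_one {A : Set Ω} (hA : MeasurableSet A) :
    IsBddMeas (A.indicator (1 : Ω → ℝ)) := by
  refine ⟨measurable_one.indicator hA, 1, fun x => ?_⟩
  by_cases hx : x ∈ A <;> simp [hx]

lemma exists_isFiniteMeasure_forall_absolutelyContinuous {ι : Type*} [Countable ι]
    (m : ι → Measure Ω) [∀ i, SFinite (m i)] :
    ∃ ν : Measure Ω, IsFiniteMeasure ν ∧ ∀ i, m i ≪ ν :=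
  ⟨(Measure.sum m).toFinite, inferInstance, fun i =>
    (Measure.absolutelyContinuous_of_le (Measure.le_sum m i)).trans
      (absolutelyContinuous_toFinite _)⟩

lemma continuous_apply_of_stronglyFeller [TopologicalSpace Ω] {k : Ω → SignedMeasure Ω}
    {T : (Ω → ℝ) → Ω → ℝ} (hT : ∀ f : Ω → ℝ, IsBddMeas f → ∀ x, T f x = sInt (k x) f)
    (hFeller : ∀ f : Ω → ℝ, IsBddMeas f → Continuous (T f))
    {A : Set Ω} (hA : MeasurableSet A) :
    Continuous fun x => k x A := by
  have hf := isBddMeas_indicator_one hA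
  convert hFeller _ hf using 1
  ext x
  rw [hT _ hf, sInt_indicator_one _ hA]

end

theorem strongly_feller_kernel_absolutely_continuous_general
    {Ω : Type*} [TopologicalSpace Ω] [PolishSpace Ω] [MeasurableSpace Ω]
    (k : Ω → SignedMeasure Ω)
    (T : (Ω → ℝ) → Ω → ℝ)
    (hT : ∀ f : Ω → ℝ, IsBddMeas f → ∀ x, T f x = sInt (k x) f)
    -- `T` is strongly Feller:
    (hFeller : ∀ f : Ω → ℝ, IsBddMeas f → Continuous (T f)) :
    ∃ μ : SignedMeasure Ω, 0 ≤ μ ∧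
      ∀ (x : Ω) (A : Set Ω), MeasurableSet A → μ A = 0 → k x A = 0 := by
  obtain ⟨D, hD_countable, hD_dense⟩ := TopologicalSpace.exists_countable_dense Ω
  have := hD_countable.to_subtype
  obtain ⟨ν, hν_fin, hν⟩ :=
    exists_isFiniteMeasure_forall_absolutelyContinuous fun x : D => (k x).totalVariation
  refine ⟨ν.toSignedMeasure, ν.zero_le_toSignedMeasure, fun x A hA hνA => ?_⟩
  rw [Measure.toSignedMeasure_apply_measurable hA, measureReal_eq_zero_iff] at hνA
  have h_null_on_D : Set.EqOn (fun y => k y A) 0 D := fun y hy =>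
    SignedMeasure.null_of_totalVariation_zero _ (hν ⟨y, hy⟩ hνA)
  exact congrFun ((continuous_apply_of_stronglyFeller hT hFeller hA).ext_on hD_dense
    continuous_const h_null_on_D) x

/-- Let `Ω` be a Polish space with its Borel `σ`-algebra and let `T` be a positive kernel
operator on `B_b(Ω)` with kernel `k`. If `T` is strongly Feller, then there exists a
positive measure `μ ∈ M(Ω)` such that `k (x, ·) ≪ μ` for every `x ∈ Ω`. -/
theorem strongly_feller_kernel_absolutely_continuous
    {Ω : Type*} [TopologicalSpace Ω] [PolishSpace Ω] [MeasurableSpace Ω] [BorelSpace Ω]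
    (k : Ω → SignedMeasure Ω)
    (hk : IsBoundedKernel k)
    (hkpos : ∀ (x : Ω) (A : Set Ω), MeasurableSet A → 0 ≤ k x A)
    (T : (Ω → ℝ) → Ω → ℝ)
    (hT : ∀ f : Ω → ℝ, IsBddMeas f → ∀ x, T f x = sInt (k x) f)
    -- `T` is strongly Feller:
    (hFeller : ∀ f : Ω → ℝ, IsBddMeas f → Continuous (T f)) :
    ∃ μ : SignedMeasure Ω, 0 ≤ μ ∧
      ∀ (x : Ω) (A : Set Ω), MeasurableSet A → μ A = 0 → k x A = 0 :=
  strongly_feller_kernel_absolutely_continuous_general k T hT hFeller
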